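/- arXiv:cs/0408014 — 9 statements merged into one kernel-verified Lean document; each statement's English description precedes it below -/
import Mathlib

section
/- A graph G' is satisfiable over the class of heaps if and only if G' contains a heap as a subgraph; that is, there exists a heap H such that H → G' if and only if there exists a heap H = ⟨V_H, t1, t2, null', root'⟩ with V_H ⊆ V', t1 ⊆ s1', t2 ⊆ s2', and the same null and root constants as G'. -/
universe u v w

/-- A (pre)graph: a node set `V` inside an ambient type, two edge relations
`s1` and `s2`, and distinguished constants `null` and `root`. -/
structure PreGraph (α : Type u) where
  V : Set α
  s1 : α → α → Prop
  s2 : α → α → Prop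
  null : α
  root : α

namespace PreGraph

/-- `G` is a graph: `V` is finite, `root` and `null` are distinct nodes of `V`,
edges lie within `V`, and `⟨null, x⟩ ∈ sᵢ` iff `x = null`. -/
def IsGraph {α : Type u} (G : PreGraph α) : Prop :=
  G.V.Finite ∧
  G.null ∈ G.V ∧ G.root ∈ G.V ∧ G.root ≠ G.null ∧
  (∀ x y, G.s1 x y → x ∈ G.V ∧ y ∈ G.V) ∧
  (∀ x y, G.s2 x y → x ∈ G.V ∧ y ∈ G.V) ∧
  (∀ x, G.s1 G.null x ↔ x = G.null) ∧
  (∀ x, G.s2 G.null x ↔ x = G.null)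

/-- `h` is a homomorphism from `G` to `G'`. -/
def IsHom {α : Type u} {β : Type v} (G : PreGraph α) (G' : PreGraph β) (h : α → β) : Prop :=
  (∀ x ∈ G.V, h x ∈ G'.V) ∧
  (∀ x y, G.s1 x y → G'.s1 (h x) (h y)) ∧
  (∀ x y, G.s2 x y → G'.s2 (h x) (h y)) ∧
  (∀ x ∈ G.V, (h x = G'.root ↔ x = G.root)) ∧
  (∀ x ∈ G.V, (h x = G'.null ↔ x = G.null))

/-- `G → G'` : there exists a homomorphism from `G` to `G'`. -/
def Maps {α : Type u} {β : Type v} (G : PreGraph α) (G' : PreGraph β) : Prop :=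
  ∃ h : α → β, IsHom G G' h

/-- An edge of `G` (either an `s1`- or an `s2`-edge). -/
def edge {α : Type u} (G : PreGraph α) (x y : α) : Prop := G.s1 x y ∨ G.s2 x y

/-- `G` is a heap: a graph in which `s1` and `s2` are total functions on `V`
and every node other than `null` is reachable from `root`. -/
def IsHeap {α : Type u} (G : PreGraph α) : Prop :=
  IsGraph G ∧
  (∀ x ∈ G.V, ∃! y, G.s1 x y) ∧
  (∀ x ∈ G.V, ∃! y, G.s2 x y) ∧
  (∀ x ∈ G.V, x ≠ G.null → Relation.ReflTransGen G.edge G.root x)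

end PreGraph

/-- A graph `G'` is satisfiable over the class of heaps iff `G'` contains a
heap as a subgraph (with the same `null` and `root` constants). -/
theorem heap_satisfiable_iff_heap_subgraph {α : Type} (G' : PreGraph α)
    (hG' : PreGraph.IsGraph G') :
    (∃ (γ : Type) (H : PreGraph γ), PreGraph.IsHeap H ∧ PreGraph.Maps H G') ↔
    (∃ H : PreGraph α, PreGraph.IsHeap H ∧ H.V ⊆ G'.V ∧
      (∀ x y, H.s1 x y → G'.s1 x y) ∧ (∀ x y, H.s2 x y → G'.s2 x y) ∧
      H.null = G'.null ∧ H.root = G'.root) := by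
  classical
  obtain ⟨hG'fin, hG'n, hG'r, hG'rn, -, -, -, -⟩ := hG'
  constructor
  · rintro ⟨γ, H, ⟨⟨hfin, hnV, hrV, hrn, hs1V, hs2V, hn1, hn2⟩, hfun1, hfun2, hreach⟩,
      h, hhV, hh1, hh2, hhr, hhn⟩
    -- successor functions in H
    let g1 : γ → γ := fun x => if hx : x ∈ H.V then (hfun1 x hx).exists.choose else x
    let g2 : γ → γ := fun x => if hx : x ∈ H.V then (hfun2 x hx).exists.choose else x
    have hg1 : ∀ x ∈ H.V, H.s1 x (g1 x) := by
      intro x hx; simp only [g1, dif_pos hx]; exact (hfun1 x hx).exists.choose_spec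
    have hg2 : ∀ x ∈ H.V, H.s2 x (g2 x) := by
      intro x hx; simp only [g2, dif_pos hx]; exact (hfun2 x hx).exists.choose_spec
    -- preimage selector
    let p : α → γ := fun v => if hv : v ∈ h '' H.V then hv.choose else H.null
    have hp : ∀ v ∈ h '' H.V, p v ∈ H.V ∧ h (p v) = v := by
      intro v hv
      simp only [p, dif_pos hv]
      obtain ⟨hm, he⟩ := hv.choose_spec
      exact ⟨hm, he⟩
    let f1 : α → α := fun v => h (g1 (p v))
    let f2 : α → α := fun v => h (g2 (p v))
    have himg : h '' H.V ⊆ G'.V := by rintro v ⟨x, hx, rfl⟩; exact hhV x hx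
    have hrimg : G'.root ∈ h '' H.V := ⟨H.root, hrV, (hhr H.root hrV).mpr rfl⟩
    have hnimg : G'.null ∈ h '' H.V := ⟨H.null, hnV, (hhn H.null hnV).mpr rfl⟩
    have hf1img : ∀ v ∈ h '' H.V, f1 v ∈ h '' H.V := by
      intro v hv
      exact ⟨g1 (p v), (hs1V _ _ (hg1 _ (hp v hv).1)).2, rfl⟩
    have hf2img : ∀ v ∈ h '' H.V, f2 v ∈ h '' H.V := by
      intro v hv
      exact ⟨g2 (p v), (hs2V _ _ (hg2 _ (hp v hv).1)).2, rfl⟩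
    have hfnull1 : f1 G'.null = G'.null := by
      have h1 := hp _ hnimg
      have hpn : p G'.null = H.null := (hhn _ h1.1).mp h1.2
      have : g1 H.null = H.null := (hn1 _).mp (hg1 _ hnV)
      simp only [f1, hpn, this]
      exact (hhn H.null hnV).mpr rfl
    have hfnull2 : f2 G'.null = G'.null := by
      have h1 := hp _ hnimg
      have hpn : p G'.null = H.null := (hhn _ h1.1).mp h1.2
      have : g2 H.null = H.null := (hn2 _).mp (hg2 _ hnV)
      simp only [f2, hpn, this]
      exact (hhn H.null hnV).mpr rfl
    -- the reachable set
    let step : α → α → Prop := fun x y => x ∈ h '' H.V ∧ (y = f1 x ∨ y = f2 x)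
    let Vr : Set α := {x | Relation.ReflTransGen step G'.root x}
    have hVr_sub : Vr ⊆ h '' H.V := by
      intro x hx
      induction hx with
      | refl => exact hrimg
      | tail _ hbc ih =>
        rcases hbc.2 with rfl | rfl
        · exact hf1img _ hbc.1
        · exact hf2img _ hbc.1
    -- the subgraph heap
    let H' : PreGraph α :=
      ⟨Vr ∪ {G'.null}, fun x y => x ∈ Vr ∪ {G'.null} ∧ y = f1 x,
        fun x y => x ∈ Vr ∪ {G'.null} ∧ y = f2 x, G'.null, G'.root⟩
    have hVimg : H'.V ⊆ h '' H.V := by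
      rintro x (hx | hx)
      · exact hVr_sub hx
      · rcases hx with rfl; exact hnimg
    have hnV' : G'.null ∈ H'.V := Or.inr rfl
    have hrV' : G'.root ∈ H'.V := Or.inl Relation.ReflTransGen.refl
    have hclose1 : ∀ x ∈ H'.V, f1 x ∈ H'.V := by
      rintro x (hx | hx)
      · exact Or.inl (Relation.ReflTransGen.tail hx ⟨hVr_sub hx, Or.inl rfl⟩)
      · rcases hx with rfl; rw [hfnull1]; exact hnV'
    have hclose2 : ∀ x ∈ H'.V, f2 x ∈ H'.V := by
      rintro x (hx | hx)
      · exact Or.inl (Relation.ReflTransGen.tail hx ⟨hVr_sub hx, Or.inr rfl⟩)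
      · rcases hx with rfl; rw [hfnull2]; exact hnV'
    have hsub1 : ∀ x y, H'.s1 x y → G'.s1 x y := by
      rintro x y ⟨hx, rfl⟩
      have hxi := hVimg hx
      obtain ⟨hpm, hpe⟩ := hp x hxi
      have := hh1 _ _ (hg1 _ hpm)
      rwa [hpe] at this
    have hsub2 : ∀ x y, H'.s2 x y → G'.s2 x y := by
      rintro x y ⟨hx, rfl⟩
      have hxi := hVimg hx
      obtain ⟨hpm, hpe⟩ := hp x hxi
      have := hh2 _ _ (hg2 _ hpm)
      rwa [hpe] at this
    have hVsub : H'.V ⊆ G'.V := fun x hx => himg (hVimg hx)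
    refine ⟨H', ⟨⟨hG'fin.subset hVsub, hnV', hrV', hG'rn, ?_, ?_, ?_, ?_⟩,
      ?_, ?_, ?_⟩, hVsub, hsub1, hsub2, rfl, rfl⟩
    · rintro x y ⟨hx, rfl⟩; exact ⟨hx, hclose1 x hx⟩
    · rintro x y ⟨hx, rfl⟩; exact ⟨hx, hclose2 x hx⟩
    · intro x
      constructor
      · rintro ⟨-, rfl⟩; exact hfnull1
      · rintro rfl; exact ⟨hnV', hfnull1.symm⟩
    · intro x
      constructor
      · rintro ⟨-, rfl⟩; exact hfnull2
      · rintro rfl; exact ⟨hnV', hfnull2.symm⟩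
    · intro x hx; exact ⟨f1 x, ⟨hx, rfl⟩, fun y hy => hy.2⟩
    · intro x hx; exact ⟨f2 x, ⟨hx, rfl⟩, fun y hy => hy.2⟩
    · rintro x (hx | hx) hxn
      · -- induction on reachability
        revert hxn
        induction hx with
        | refl => intro _; exact Relation.ReflTransGen.refl
        | tail hab hbc ih =>
          intro hxn
          rename_i b c
          have hb : b ∈ H'.V := Or.inl hab
          have hstep : PreGraph.edge H' b c := by
            rcases hbc.2 with rfl | rfl
            · exact Or.inl ⟨hb, rfl⟩
            · exact Or.inr ⟨hb, rfl⟩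
          by_cases hbn : b = G'.null
          · exfalso
            apply hxn
            subst hbn
            rcases hbc.2 with rfl | rfl
            · exact hfnull1
            · exact hfnull2
          · exact Relation.ReflTransGen.tail (ih hbn) hstep
      · exact absurd hx hxn
  · rintro ⟨H, hH, hVsub, hs1, hs2, hnull, hroot⟩
    refine ⟨α, H, hH, id, fun x hx => hVsub hx, fun x y hxy => hs1 x y hxy,
      fun x y hxy => hs2 x y hxy, ?_, ?_⟩
    · intro x _; rw [hroot]; exact Iff.rfl
    · intro x _; rw [hnull]; exact Iff.rfl
end

section
/- For all graphs G1 and G2: G1 ⇝_H G2 if and only if G1 ≈_H G1 × G2, where H is the class of all heaps; that is, G1 implies G2 over heaps iff G1 and the Cartesian product G1 × G2 have exactly the same heap models. -/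
universe u v w

/-- `G1 ⇝_H G2` : implication over the class of all heaps. -/
def HeapImplies {α : Type u} {β : Type v} (G1 : PreGraph α) (G2 : PreGraph β) : Prop :=
  ∀ (γ : Type) (H : PreGraph γ), PreGraph.IsHeap H →
    PreGraph.Maps H G1 → PreGraph.Maps H G2

/-- `G1 ≈_H G2` : equivalence over the class of all heaps. -/
def HeapEquiv {α : Type u} {β : Type v} (G1 : PreGraph α) (G2 : PreGraph β) : Prop :=
  ∀ (γ : Type) (H : PreGraph γ), PreGraph.IsHeap H →
    (PreGraph.Maps H G1 ↔ PreGraph.Maps H G2)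

/-- The node set of the Cartesian product of two graphs. -/
def prodV {α : Type u} {β : Type v} (G1 : PreGraph α) (G2 : PreGraph β) : Set (α × β) :=
  ({(G1.null, G2.null), (G1.root, G2.root)} : Set (α × β)) ∪
    (G1.V \ {G1.null, G1.root}) ×ˢ (G2.V \ {G2.null, G2.root})

/-- The Cartesian product `G1 × G2` of two graphs. -/
def gprod {α : Type u} {β : Type v} (G1 : PreGraph α) (G2 : PreGraph β) :
    PreGraph (α × β) where
  V := prodV G1 G2
  s1 := fun p q => p ∈ prodV G1 G2 ∧ q ∈ prodV G1 G2 ∧ G1.s1 p.1 q.1 ∧ G2.s1 p.2 q.2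
  s2 := fun p q => p ∈ prodV G1 G2 ∧ q ∈ prodV G1 G2 ∧ G1.s2 p.1 q.1 ∧ G2.s2 p.2 q.2
  null := (G1.null, G2.null)
  root := (G1.root, G2.root)

open PreGraph

lemma mem_prodV_iff {α : Type u} {β : Type v} (G1 : PreGraph α) (G2 : PreGraph β)
    (p : α × β) :
    p ∈ prodV G1 G2 ↔ p = (G1.null, G2.null) ∨ p = (G1.root, G2.root) ∨
      (p.1 ∈ G1.V ∧ p.1 ≠ G1.null ∧ p.1 ≠ G1.root ∧
       p.2 ∈ G2.V ∧ p.2 ≠ G2.null ∧ p.2 ≠ G2.root) := by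
  simp only [prodV, Set.mem_union, Set.mem_insert_iff, Set.mem_singleton_iff,
    Set.mem_prod, Set.mem_diff]
  tauto

lemma pair_hom {α : Type u} {β : Type v} {γ : Type w}
    {G1 : PreGraph α} {G2 : PreGraph β} {H : PreGraph γ}
    (hH : H.IsGraph) {f : γ → α} {g : γ → β}
    (hf : IsHom H G1 f) (hg : IsHom H G2 g) :
    IsHom H (gprod G1 G2) (fun x => (f x, g x)) := by
  obtain ⟨hfV, hfs1, hfs2, hfr, hfn⟩ := hf
  obtain ⟨hgV, hgs1, hgs2, hgr, hgn⟩ := hg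
  have hmem : ∀ x ∈ H.V, (f x, g x) ∈ prodV G1 G2 := by
    intro x hx
    rw [mem_prodV_iff]
    rcases eq_or_ne x H.null with rfl | hn
    · left
      rw [Prod.mk.injEq]
      exact ⟨(hfn _ hx).mpr rfl, (hgn _ hx).mpr rfl⟩
    rcases eq_or_ne x H.root with rfl | hr
    · right; left
      rw [Prod.mk.injEq]
      exact ⟨(hfr _ hx).mpr rfl, (hgr _ hx).mpr rfl⟩
    · right; right
      refine ⟨hfV _ hx, fun h => hn ((hfn _ hx).mp h), fun h => hr ((hfr _ hx).mp h),
        hgV _ hx, fun h => hn ((hgn _ hx).mp h), fun h => hr ((hgr _ hx).mp h)⟩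
  refine ⟨hmem, ?_, ?_, ?_, ?_⟩
  · intro x y hxy
    obtain ⟨hx, hy⟩ := hH.2.2.2.2.1 x y hxy
    exact ⟨hmem x hx, hmem y hy, hfs1 _ _ hxy, hgs1 _ _ hxy⟩
  · intro x y hxy
    obtain ⟨hx, hy⟩ := hH.2.2.2.2.2.1 x y hxy
    exact ⟨hmem x hx, hmem y hy, hfs2 _ _ hxy, hgs2 _ _ hxy⟩
  · intro x hx
    constructor
    · intro h
      have : f x = G1.root := congrArg Prod.fst h
      exact (hfr _ hx).mp this
    · intro h
      show (f x, g x) = (G1.root, G2.root)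
      rw [Prod.mk.injEq]
      exact ⟨(hfr _ hx).mpr h, (hgr _ hx).mpr h⟩
  · intro x hx
    constructor
    · intro h
      have : f x = G1.null := congrArg Prod.fst h
      exact (hfn _ hx).mp this
    · intro h
      show (f x, g x) = (G1.null, G2.null)
      rw [Prod.mk.injEq]
      exact ⟨(hfn _ hx).mpr h, (hgn _ hx).mpr h⟩

lemma fst_hom {α : Type u} {β : Type v} {γ : Type w}
    {G1 : PreGraph α} {G2 : PreGraph β} {H : PreGraph γ}
    (h1 : G1.IsGraph) {f : γ → α × β}
    (hf : IsHom H (gprod G1 G2) f) :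
    IsHom H G1 (fun x => (f x).1) := by
  obtain ⟨hfV, hfs1, hfs2, hfr, hfn⟩ := hf
  refine ⟨?_, fun x y hxy => (hfs1 x y hxy).2.2.1, fun x y hxy => (hfs2 x y hxy).2.2.1,
    ?_, ?_⟩
  · intro x hx
    rcases (mem_prodV_iff G1 G2 _).mp (hfV x hx) with h | h | h
    · show (f x).1 ∈ G1.V; rw [h]; exact h1.2.1
    · show (f x).1 ∈ G1.V; rw [h]; exact h1.2.2.1
    · exact h.1
  · intro x hx
    constructor
    · intro h
      rcases (mem_prodV_iff G1 G2 _).mp (hfV x hx) with hc | hc | hc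
    
      · exact absurd ((h.symm.trans (congrArg Prod.fst hc)) : G1.root = G1.null) h1.2.2.2.1
      · exact (hfr x hx).mp hc
      · exact absurd h hc.2.2.1
    · intro h
      exact congrArg Prod.fst ((hfr x hx).mpr h)
  · intro x hx
    constructor
    · intro h
      rcases (mem_prodV_iff G1 G2 _).mp (hfV x hx) with hc | hc | hc
      · exact (hfn x hx).mp hc
      · exact absurd ((h.symm.trans (congrArg Prod.fst hc)) : G1.null = G1.root).symm h1.2.2.2.1
      · exact absurd h hc.2.1
    · intro h
      exact congrArg Prod.fst ((hfn x hx).mpr h)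

lemma snd_hom {α : Type u} {β : Type v} {γ : Type w}
    {G1 : PreGraph α} {G2 : PreGraph β} {H : PreGraph γ}
    (h2 : G2.IsGraph) {f : γ → α × β}
    (hf : IsHom H (gprod G1 G2) f) :
    IsHom H G2 (fun x => (f x).2) := by
  obtain ⟨hfV, hfs1, hfs2, hfr, hfn⟩ := hf
  refine ⟨?_, fun x y hxy => (hfs1 x y hxy).2.2.2, fun x y hxy => (hfs2 x y hxy).2.2.2,
    ?_, ?_⟩
  · intro x hx
    rcases (mem_prodV_iff G1 G2 _).mp (hfV x hx) with h | h | h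
    · show (f x).2 ∈ G2.V; rw [h]; exact h2.2.1
    · show (f x).2 ∈ G2.V; rw [h]; exact h2.2.2.1
    · exact h.2.2.2.1
  · intro x hx
    constructor
    · intro h
      rcases (mem_prodV_iff G1 G2 _).mp (hfV x hx) with hc | hc | hc
      · exact absurd ((h.symm.trans (congrArg Prod.snd hc)) : G2.root = G2.null) h2.2.2.2.1
      · exact (hfr x hx).mp hc
      · exact absurd h hc.2.2.2.2.2
    · intro h
      exact congrArg Prod.snd ((hfr x hx).mpr h)
  · intro x hx
    constructor
    · intro h
      rcases (mem_prodV_iff G1 G2 _).mp (hfV x hx) with hc | hc | hc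
      · exact (hfn x hx).mp hc
      · exact absurd ((h.symm.trans (congrArg Prod.snd hc)) : G2.null = G2.root).symm h2.2.2.2.1
      · exact absurd h hc.2.2.2.2.1
    · intro h
      exact congrArg Prod.snd ((hfn x hx).mpr h)

lemma maps_prod_iff_s6 {α : Type u} {β : Type v} {γ : Type w}
    (G1 : PreGraph α) (G2 : PreGraph β) (H : PreGraph γ)
    (h1 : G1.IsGraph) (h2 : G2.IsGraph) (hH : H.IsGraph) :
    Maps H (gprod G1 G2) ↔ Maps H G1 ∧ Maps H G2 := by
  constructor
  · rintro ⟨f, hf⟩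
    exact ⟨⟨_, fst_hom h1 hf⟩, ⟨_, snd_hom h2 hf⟩⟩
  · rintro ⟨⟨f, hf⟩, ⟨g, hg⟩⟩
    exact ⟨_, pair_hom hH hf hg⟩

/-- `G1 ⇝_H G2` iff `G1 ≈_H G1 × G2` : `G1` implies `G2` over heaps iff `G1`
and the Cartesian product `G1 × G2` have exactly the same heap models. -/
theorem heapImplies_iff_heapEquiv_prod {α β : Type} (G1 : PreGraph α)
    (G2 : PreGraph β) (h1 : PreGraph.IsGraph G1) (h2 : PreGraph.IsGraph G2) :
    HeapImplies G1 G2 ↔ HeapEquiv G1 (gprod G1 G2) := by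
  constructor
  · intro himp γ H hH
    constructor
    · intro hm
      exact (maps_prod_iff_s6 G1 G2 H h1 h2 hH.1).mpr ⟨hm, himp γ H hH hm⟩
    · intro hm
      exact ((maps_prod_iff_s6 G1 G2 H h1 h2 hH.1).mp hm).1
  · intro heq γ H hH hm
    exact ((maps_prod_iff_s6 G1 G2 H h1 h2 hH.1).mp ((heq γ H hH).mp hm)).2
end

section
/- Regular graph constraints over heaps are not closed under negation: there exists a graph G such that no graph Ḡ satisfies 'for every heap H, H → Ḡ if and only if not H → G'. -/
universe u v w

open PreGraph

/-- The graph `G`: null = 0, root = 1, and a 2-cycle 2 ↔ 3 entered from root. -/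
def NCG : PreGraph ℕ where
  V := {n | n ≤ 3}
  s1 := fun x y => (x = 1 ∧ y = 2) ∨ (x = 2 ∧ y = 3) ∨ (x = 3 ∧ y = 2) ∨ (x = 0 ∧ y = 0)
  s2 := fun x y => x ≤ 3 ∧ y = 0
  null := 0
  root := 1

/-- The fold `H'`: null = 0, root = 1, self-loop at 2. -/
def NCH : PreGraph ℕ where
  V := {n | n ≤ 2}
  s1 := fun x y => (x = 1 ∧ y = 2) ∨ (x = 2 ∧ y = 2) ∨ (x = 0 ∧ y = 0)
  s2 := fun x y => x ≤ 2 ∧ y = 0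
  null := 0
  root := 1

lemma NCG_isGraph : IsGraph NCG := by
  refine ⟨(Set.finite_Iic 3), ?_, ?_, ?_, ?_, ?_, ?_, ?_⟩
  · show (0:ℕ) ∈ {m : ℕ | m ≤ 3}; simp
  · show (1:ℕ) ∈ {m : ℕ | m ≤ 3}; simp
  · show (1:ℕ) ≠ 0; omega
  · intro x y h; simp only [NCG, Set.mem_setOf_eq] at h ⊢; omega
  · intro x y h; simp only [NCG, Set.mem_setOf_eq] at h ⊢; omega
  · intro x
    show ((0 = 1 ∧ x = 2) ∨ (0 = 2 ∧ x = 3) ∨ (0 = 3 ∧ x = 2) ∨ (0 = 0 ∧ x = 0)) ↔ x = 0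
    omega
  · intro x
    show ((0:ℕ) ≤ 3 ∧ x = 0) ↔ x = 0
    omega

lemma NCH_isGraph : IsGraph NCH := by
  refine ⟨(Set.finite_Iic 2), ?_, ?_, ?_, ?_, ?_, ?_, ?_⟩
  · show (0:ℕ) ∈ {m : ℕ | m ≤ 2}; simp
  · show (1:ℕ) ∈ {m : ℕ | m ≤ 2}; simp
  · show (1:ℕ) ≠ 0; omega
  · intro x y h; simp only [NCH, Set.mem_setOf_eq] at h ⊢; omega
  · intro x y h; simp only [NCH, Set.mem_setOf_eq] at h ⊢; omega
  · intro x
    show ((0 = 1 ∧ x = 2) ∨ (0 = 2 ∧ x = 2) ∨ (0 = 0 ∧ x = 0)) ↔ x = 0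
    omega
  · intro x
    show ((0:ℕ) ≤ 2 ∧ x = 0) ↔ x = 0
    omega

lemma NCG_isHeap : IsHeap NCG := by
  refine ⟨NCG_isGraph, ?_, ?_, ?_⟩
  · intro x hx
    simp only [NCG, Set.mem_setOf_eq] at hx
    interval_cases x
    · exact ⟨0, by simp [NCG], fun y hy => by simp [NCG] at hy; omega⟩
    · exact ⟨2, by simp [NCG], fun y hy => by simp [NCG] at hy; omega⟩
    · exact ⟨3, by simp [NCG], fun y hy => by simp [NCG] at hy; omega⟩
    · exact ⟨2, by simp [NCG], fun y hy => by simp [NCG] at hy; omega⟩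
  · intro x hx
    simp only [NCG, Set.mem_setOf_eq] at hx
    exact ⟨0, by simp [NCG]; omega, fun y hy => by simp [NCG] at hy; omega⟩
  · intro x hx hne
    simp only [NCG, Set.mem_setOf_eq] at hx
    simp only [NCG] at hne
    have e12 : NCG.edge 1 2 := Or.inl (by simp [NCG])
    have e23 : NCG.edge 2 3 := Or.inl (by simp [NCG])
    show Relation.ReflTransGen NCG.edge 1 x
    interval_cases x
    · omega
    · exact Relation.ReflTransGen.refl
    · exact Relation.ReflTransGen.single e12
    · exact (Relation.ReflTransGen.single e12).tail e23

lemma NCH_isHeap : IsHeap NCH := by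
  refine ⟨NCH_isGraph, ?_, ?_, ?_⟩
  · intro x hx
    simp only [NCH, Set.mem_setOf_eq] at hx
    interval_cases x
    · exact ⟨0, by simp [NCH], fun y hy => by simp [NCH] at hy; omega⟩
    · exact ⟨2, by simp [NCH], fun y hy => by simp [NCH] at hy; omega⟩
    · exact ⟨2, by simp [NCH], fun y hy => by simp [NCH] at hy; omega⟩
  · intro x hx
    simp only [NCH, Set.mem_setOf_eq] at hx
    exact ⟨0, by simp [NCH]; omega, fun y hy => by simp [NCH] at hy; omega⟩
  · intro x hx hne
    simp only [NCH, Set.mem_setOf_eq] at hx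
    simp only [NCH] at hne
    have e12 : NCH.edge 1 2 := Or.inl (by simp [NCH])
    show Relation.ReflTransGen NCH.edge 1 x
    interval_cases x
    · omega
    · exact Relation.ReflTransGen.refl
    · exact Relation.ReflTransGen.single e12

/-- Homomorphisms compose. -/
lemma isHom_comp {α β γ} {G1 : PreGraph α} {G2 : PreGraph β} {G3 : PreGraph γ}
    {f : α → β} {g : β → γ} (h1 : IsHom G1 G2 f) (h2 : IsHom G2 G3 g) :
    IsHom G1 G3 (g ∘ f) := by
  obtain ⟨v1, e1, e1', r1, n1⟩ := h1
  obtain ⟨v2, e2, e2', r2, n2⟩ := h2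
  refine ⟨fun x hx => v2 _ (v1 x hx), fun x y h => e2 _ _ (e1 _ _ h),
    fun x y h => e2' _ _ (e1' _ _ h), ?_, ?_⟩
  · intro x hx
    exact (r2 _ (v1 x hx)).trans (r1 x hx)
  · intro x hx
    exact (n2 _ (v1 x hx)).trans (n1 x hx)

/-- The folding homomorphism from `NCG` to `NCH`. -/
lemma NCG_maps_NCH : Maps NCG NCH := by
  refine ⟨fun n => min n 2, ?_, ?_, ?_, ?_, ?_⟩
  · intro x hx; simp only [NCG, Set.mem_setOf_eq] at hx
    simp only [NCH, Set.mem_setOf_eq]; omega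
  · intro x y h; simp only [NCG] at h; simp only [NCH]; omega
  · intro x y h; simp only [NCG] at h; simp only [NCH]; omega
  · intro x hx; simp only [NCG, Set.mem_setOf_eq] at hx
    simp only [NCG, NCH]; omega
  · intro x hx; simp only [NCG, Set.mem_setOf_eq] at hx
    simp only [NCG, NCH]; omega

/-- `NCG` maps to itself via the identity. -/
lemma NCG_maps_self : Maps NCG NCG :=
  ⟨id, fun _ hx => hx, fun _ _ h => h, fun _ _ h => h,
    fun _ _ => Iff.rfl, fun _ _ => Iff.rfl⟩

/-- `NCH` does not map to `NCG` (the self-loop cannot be matched). -/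
lemma not_NCH_maps_NCG : ¬ Maps NCH NCG := by
  rintro ⟨h, hv, he1, _, _, hn⟩
  have h22 : NCG.s1 (h 2) (h 2) := he1 2 2 (by simp [NCH])
  have h2n : h 2 = 0 ↔ (2 : ℕ) = 0 := hn 2 (by simp only [NCH, Set.mem_setOf_eq]; omega)
  simp only [NCG] at h22 h2n
  omega

/-- Regular graph constraints over heaps are not closed under negation: there
is a graph `G` such that no graph `Ḡ` satisfies: for every heap `H`,
`H → Ḡ` iff not `H → G`. -/
theorem not_closed_under_negation :
    ∃ (α : Type) (G : PreGraph α), PreGraph.IsGraph G ∧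
      ¬ ∃ (β : Type) (Gbar : PreGraph β), PreGraph.IsGraph Gbar ∧
        ∀ (γ : Type) (H : PreGraph γ), PreGraph.IsHeap H →
          (PreGraph.Maps H Gbar ↔ ¬ PreGraph.Maps H G) := by
  refine ⟨ℕ, NCG, NCG_isGraph, ?_⟩
  rintro ⟨β, Gbar, _, hall⟩
  have hH : Maps NCH Gbar := (hall ℕ NCH NCH_isHeap).mpr not_NCH_maps_NCG
  obtain ⟨f, hf⟩ := NCG_maps_NCH
  obtain ⟨g, hg⟩ := hH
  have hG : Maps NCG Gbar := ⟨g ∘ f, isHom_comp hf hg⟩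
  exact (hall ℕ NCG NCG_isHeap).mp hG NCG_maps_self
end

section
/- Regular expression test: suppose G0 → G. Then for every regular expression e over the alphabet {1,2}, if G0 contains a slice p with word(p) in the language of e, then G contains a slice p' with word(p') in the language of e. -/
universe u v w

/-- A path in `G` starting at `x`, given as a list of (label, next node) steps,
with labels in `{1, 2}`; all nodes lie in `V` and consecutive nodes are joined
by an edge of the corresponding relation. -/
def IsPath {α : Type u} (G : PreGraph α) : α → List (ℕ × α) → Prop
  | x, [] => x ∈ G.V
  | x, (l, y) :: rest =>
      x ∈ G.V ∧ ((l = 1 ∧ G.s1 x y) ∨ (l = 2 ∧ G.s2 x y)) ∧ IsPath G y rest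

/-- The terminal node of a path starting at `x` with steps `p`. -/
def pathEnd {α : Type u} (x : α) (p : List (ℕ × α)) : α :=
  p.foldl (fun _ s => s.2) x

/-- The word of labels of a path. -/
def word {α : Type u} (p : List (ℕ × α)) : List ℕ := p.map Prod.fst

/-- A slice is a path starting at `root` and terminating at `null`. -/
def IsSlice {α : Type u} (G : PreGraph α) (x : α) (p : List (ℕ × α)) : Prop :=
  IsPath G x p ∧ x = G.root ∧ pathEnd x p = G.null

/-- The image of a path under a map `h` on nodes. -/
def mapPath {α : Type u} {β : Type v} (h : α → β) (p : List (ℕ × α)) :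
    List (ℕ × β) :=
  p.map fun s => (s.1, h s.2)

namespace IsPath

variable {α : Type u} {β : Type v} {G : PreGraph α} {G' : PreGraph β}

theorem start_mem {x : α} {p : List (ℕ × α)} (hp : IsPath G x p) : x ∈ G.V := by
  cases p with
  | nil => exact hp
  | cons _ _ => exact hp.1

theorem pathEnd_mem {x : α} {p : List (ℕ × α)} (hp : IsPath G x p) : pathEnd x p ∈ G.V := by
  induction p generalizing x with
  | nil => exact hp
  | cons s _ ih => exact ih (x := s.2) hp.2.2

theorem map {h : α → β} (hh : PreGraph.IsHom G G' h) {x : α} {p : List (ℕ × α)}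
    (hp : IsPath G x p) : IsPath G' (h x) (mapPath h p) := by
  obtain ⟨hV, hs1, hs2, -, -⟩ := hh
  induction p generalizing x with
  | nil => exact hV x hp
  | cons s _ ih =>
    obtain ⟨hx, hstep, hrest⟩ := hp
    refine ⟨hV x hx, ?_, ih hrest⟩
    rcases hstep with ⟨hl, he⟩ | ⟨hl, he⟩
    · exact Or.inl ⟨hl, hs1 _ _ he⟩
    · exact Or.inr ⟨hl, hs2 _ _ he⟩

end IsPath

theorem pathEnd_mapPath {α : Type u} {β : Type v} (h : α → β) (x : α) (p : List (ℕ × α)) :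
    pathEnd (h x) (mapPath h p) = h (pathEnd x p) := by
  induction p generalizing x with
  | nil => rfl
  | cons s _ ih => exact ih s.2

theorem word_mapPath {α : Type u} {β : Type v} (h : α → β) (p : List (ℕ × α)) :
    word (mapPath h p) = word p := by
  simp [word, mapPath, Function.comp_def]

theorem IsSlice.map {α : Type u} {β : Type v} {G : PreGraph α} {G' : PreGraph β} {h : α → β}
    (hh : PreGraph.IsHom G G' h) {x : α} {p : List (ℕ × α)} (hs : IsSlice G x p) :
    IsSlice G' (h x) (mapPath h p) := by
  obtain ⟨hp, hroot, hend⟩ := hs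
  have hp' := hp.map hh
  obtain ⟨-, -, -, hh_root, hh_null⟩ := hh
  refine ⟨hp', (hh_root x hp.start_mem).mpr hroot, ?_⟩
  rw [pathEnd_mapPath]
  exact (hh_null _ hp.pathEnd_mem).mpr hend

/-- Regular expression test: if `G0 → G` and `e` is a regular expression over
the alphabet `{1, 2}` such that `G0` contains a slice whose word matches `e`,
then `G` contains a slice whose word matches `e`. -/
theorem regular_expression_test {α β : Type} (G0 : PreGraph α) (G : PreGraph β)
    (hmaps : PreGraph.Maps G0 G) (e : RegularExpression ℕ)
    (x : α) (p : List (ℕ × α)) (hs : IsSlice G0 x p)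
    (hw : word p ∈ e.matches') :
    ∃ (y : β) (q : List (ℕ × β)), IsSlice G y q ∧ word q ∈ e.matches' := by
  obtain ⟨h, hh⟩ := hmaps
  exact ⟨h x, mapPath h p, hs.map hh, by rwa [word_mapPath]⟩
end

section
/- Conjunction via Cartesian product: for every graph G and all graphs G1, G2, we have G → G1 × G2 if and only if (G → G1 and G → G2). -/
universe u v w

lemma mem_prodV {α : Type u} {β : Type v} {G1 : PreGraph α} {G2 : PreGraph β} {p : α × β} :
    p ∈ prodV G1 G2 ↔ p = (G1.null, G2.null) ∨ p = (G1.root, G2.root) ∨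
      (p.1 ∈ G1.V ∧ p.1 ≠ G1.null ∧ p.1 ≠ G1.root ∧
       p.2 ∈ G2.V ∧ p.2 ≠ G2.null ∧ p.2 ≠ G2.root) := by
  simp only [prodV, Set.mem_union, Set.mem_insert_iff, Set.mem_singleton_iff,
    Set.mem_prod, Set.mem_diff]
  tauto

/-- Conjunction via Cartesian product: `G → G1 × G2` iff
(`G → G1` and `G → G2`). -/
theorem maps_prod_iff {α β γ : Type} (G : PreGraph γ)
    (G1 : PreGraph α) (G2 : PreGraph β)
    (hG : PreGraph.IsGraph G) (h1 : PreGraph.IsGraph G1)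
    (h2 : PreGraph.IsGraph G2) :
    PreGraph.Maps G (gprod G1 G2) ↔
      (PreGraph.Maps G G1 ∧ PreGraph.Maps G G2) := by
  obtain ⟨-, -, -, hGrn, hGe1, hGe2, -, -⟩ := hG
  obtain ⟨-, h1n, h1r, h1rn, -, -, -, -⟩ := h1
  obtain ⟨-, h2n, h2r, h2rn, -, -, -, -⟩ := h2
  constructor
  · rintro ⟨h, hV, hs1, hs2, hroot, hnull⟩
    constructor
    · refine ⟨fun x => (h x).1, ?_, ?_, ?_, ?_, ?_⟩
      · intro x hx
        show (h x).1 ∈ G1.V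
        rcases mem_prodV.mp (hV x hx) with hc | hc | hc
        · rw [hc]; exact h1n
        · rw [hc]; exact h1r
        · exact hc.1
      · intro x y hxy; exact (hs1 x y hxy).2.2.1
      · intro x y hxy; exact (hs2 x y hxy).2.2.1
      · intro x hx
        constructor
        · intro hr
          have hr' : (h x).1 = G1.root := hr
          rcases mem_prodV.mp (hV x hx) with hc | hc | hc
          · exact absurd (hr'.symm.trans (congrArg Prod.fst hc)) h1rn
          · exact (hroot x hx).mp (by rw [show (gprod G1 G2).root = (G1.root, G2.root) from rfl, ← hc])
          · exact absurd hr' hc.2.2.1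
        · intro hr
          have := (hroot x hx).mpr hr
          exact congrArg Prod.fst this
      · intro x hx
        constructor
        · intro hr
          have hr' : (h x).1 = G1.null := hr
          rcases mem_prodV.mp (hV x hx) with hc | hc | hc
          · exact (hnull x hx).mp (by rw [show (gprod G1 G2).null = (G1.null, G2.null) from rfl, ← hc])
          · exact absurd ((congrArg Prod.fst hc).symm.trans hr') h1rn
          · exact absurd hr' hc.2.1
        · intro hr
          exact congrArg Prod.fst ((hnull x hx).mpr hr)
    · refine ⟨fun x => (h x).2, ?_, ?_, ?_, ?_, ?_⟩
      · intro x hx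
        show (h x).2 ∈ G2.V
        rcases mem_prodV.mp (hV x hx) with hc | hc | hc
        · rw [hc]; exact h2n
        · rw [hc]; exact h2r
        · exact hc.2.2.2.1
      · intro x y hxy; exact (hs1 x y hxy).2.2.2
      · intro x y hxy; exact (hs2 x y hxy).2.2.2
      · intro x hx
        constructor
        · intro hr
          have hr' : (h x).2 = G2.root := hr
          rcases mem_prodV.mp (hV x hx) with hc | hc | hc
          · exact absurd (hr'.symm.trans (congrArg Prod.snd hc)) h2rn
          · exact (hroot x hx).mp (by rw [show (gprod G1 G2).root = (G1.root, G2.root) from rfl, ← hc])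
          · exact absurd hr' hc.2.2.2.2.2
        · intro hr
          exact congrArg Prod.snd ((hroot x hx).mpr hr)
      · intro x hx
        constructor
        · intro hr
          have hr' : (h x).2 = G2.null := hr
          rcases mem_prodV.mp (hV x hx) with hc | hc | hc
          · exact (hnull x hx).mp (by rw [show (gprod G1 G2).null = (G1.null, G2.null) from rfl, ← hc])
          · exact absurd ((congrArg Prod.snd hc).symm.trans hr') h2rn
          · exact absurd hr' hc.2.2.2.2.1
        · intro hr
          exact congrArg Prod.snd ((hnull x hx).mpr hr)
  · rintro ⟨⟨f1, fV1, fs11, fs21, fr1, fn1⟩, ⟨f2, fV2, fs12, fs22, fr2, fn2⟩⟩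
    have hmem : ∀ x ∈ G.V, (f1 x, f2 x) ∈ prodV G1 G2 := by
      intro x hx
      by_cases hxr : x = G.root
      · exact mem_prodV.mpr (Or.inr (Or.inl (by
          rw [(fr1 x hx).mpr hxr, (fr2 x hx).mpr hxr])))
      by_cases hxn : x = G.null
      · exact mem_prodV.mpr (Or.inl (by
          rw [(fn1 x hx).mpr hxn, (fn2 x hx).mpr hxn]))
      · refine mem_prodV.mpr (Or.inr (Or.inr ⟨fV1 x hx, ?_, ?_, fV2 x hx, ?_, ?_⟩))
        · exact fun h => hxn ((fn1 x hx).mp h)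
        · exact fun h => hxr ((fr1 x hx).mp h)
        · exact fun h => hxn ((fn2 x hx).mp h)
        · exact fun h => hxr ((fr2 x hx).mp h)
    refine ⟨fun x => (f1 x, f2 x), fun x hx => hmem x hx, ?_, ?_, ?_, ?_⟩
    · intro x y hxy
      exact ⟨hmem x (hGe1 x y hxy).1, hmem y (hGe1 x y hxy).2, fs11 x y hxy, fs12 x y hxy⟩
    · intro x y hxy
      exact ⟨hmem x (hGe2 x y hxy).1, hmem y (hGe2 x y hxy).2, fs21 x y hxy, fs22 x y hxy⟩
    · intro x hx
      constructor
      · intro hr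
        exact (fr1 x hx).mp (congrArg Prod.fst hr)
      · intro hr
        exact Prod.ext ((fr1 x hx).mpr hr) ((fr2 x hx).mpr hr)
    · intro x hx
      constructor
      · intro hr
        exact (fn1 x hx).mp (congrArg Prod.fst hr)
      · intro hr
        exact Prod.ext ((fn1 x hx).mpr hr) ((fn2 x hx).mpr hr)
end

section
/- Disjunction via sum: let G be a heap and let G1, G2 be orable graphs with V¹ ∩ V² = {null, root} (sharing the same null and root). Then G → G1 + G2 if and only if (G → G1 or G → G2). -/
universe u v w

/-- A graph is orable iff `⟨root, x⟩ ∈ s2` iff `x = null`. -/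
def IsOrable {α : Type u} (G : PreGraph α) : Prop :=
  PreGraph.IsGraph G ∧ ∀ x, G.s2 G.root x ↔ x = G.null

/-- The graph sum `G1 + G2` of two graphs over the same ambient type that
share their `null` and `root` nodes. -/
def gsum {α : Type u} (G1 G2 : PreGraph α) : PreGraph α where
  V := G1.V ∪ G2.V
  s1 := fun x y => G1.s1 x y ∨ G2.s1 x y
  s2 := fun x y => G1.s2 x y ∨ G2.s2 x y
  null := G1.null
  root := G1.root

lemma maps_gsum_aux {γ α : Type} (G : PreGraph γ) (A B : PreGraph α)
    (hG : PreGraph.IsHeap G)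
    (hA : IsOrable A) (hB : IsOrable B)
    (hnull : B.null = A.null) (hroot : B.root = A.root)
    (hinter : A.V ∩ B.V ⊆ {A.null, A.root})
    (h : γ → α)
    (hs1 : ∀ x y, G.s1 x y → A.s1 (h x) (h y) ∨ B.s1 (h x) (h y))
    (hs2 : ∀ x y, G.s2 x y → A.s2 (h x) (h y) ∨ B.s2 (h x) (h y))
    (hrt : ∀ x ∈ G.V, (h x = A.root ↔ x = G.root))
    (hnl : ∀ x ∈ G.V, (h x = A.null ↔ x = G.null))
    (hc : ∀ y, G.s1 G.root y → A.s1 A.root (h y)) :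
    PreGraph.IsHom G A h := by
  obtain ⟨⟨hfin, hnV, hrV, hrn, hs1VG, hs2VG, h1n, h2n⟩, hf1, hf2, hreach⟩ := hG
  obtain ⟨⟨_, hAnV, hArV, hArn, hAs1V, hAs2V, hA1n, hA2n⟩, hAor⟩ := hA
  obtain ⟨⟨_, hBnV, hBrV, hBrn, hBs1V, hBs2V, hB1n, hB2n⟩, hBor⟩ := hB
  -- key claim: everything maps into A.V
  have key : ∀ x ∈ G.V, h x ∈ A.V := by
    intro x hx
    by_cases hxn : x = G.null
    · rw [(hnl x hx).mpr hxn]; exact hAnV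
    · have reach := hreach x hx hxn
      suffices H : x ∈ G.V ∧ h x ∈ A.V from H.2
      clear hx hxn
      induction reach with
      | refl =>
        refine ⟨hrV, ?_⟩
        rw [(hrt _ hrV).mpr rfl]; exact hArV
      | tail _ hbc ih =>
        rename_i b c _
        obtain ⟨hbV, hbA⟩ := ih
        cases hbc with
        | inl e =>
          refine ⟨(hs1VG _ _ e).2, ?_⟩
          rcases hs1 _ _ e with he | he
          · exact (hAs1V _ _ he).2
          · have hbB : h b ∈ B.V := (hBs1V _ _ he).1
            rcases hinter ⟨hbA, hbB⟩ with hn | hr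
            · have hb0 : b = G.null := (hnl b hbV).mp hn
              have hc0 : c = G.null := (h1n c).mp (hb0 ▸ e)
              rw [(hnl c ((hs1VG _ _ e).2)).mpr hc0]; exact hAnV
            · have hb0 : b = G.root := (hrt b hbV).mp hr
              exact (hAs1V _ _ (hc c (hb0 ▸ e))).2
        | inr e =>
          refine ⟨(hs2VG _ _ e).2, ?_⟩
          rcases hs2 _ _ e with he | he
          · exact (hAs2V _ _ he).2
          · have hbB : h b ∈ B.V := (hBs2V _ _ he).1
            rcases hinter ⟨hbA, hbB⟩ with hn | hr
            · have hb0 : b = G.null := (hnl b hbV).mp hn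
              have hc0 : c = G.null := (h2n c).mp (hb0 ▸ e)
              rw [(hnl c ((hs2VG _ _ e).2)).mpr hc0]; exact hAnV
            · have hcn : h c = B.null := (hBor (h c)).mp (by rw [hroot, ← hr]; exact he)
              rw [hcn, hnull]; exact hAnV
  refine ⟨key, ?_, ?_, hrt, hnl⟩
  · -- s1 edges
    intro x y e
    rcases hs1 _ _ e with he | he
    · exact he
    · have hxA : h x ∈ A.V := key x (hs1VG _ _ e).1
      have hxB : h x ∈ B.V := (hBs1V _ _ he).1
      rcases hinter ⟨hxA, hxB⟩ with hn | hr
      · have hx0 : x = G.null := (hnl x (hs1VG _ _ e).1).mp hn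
        have hy0 : y = G.null := (h1n y).mp (hx0 ▸ e)
        rw [hn, (hnl y (hs1VG _ _ e).2).mpr hy0]
        exact (hA1n A.null).mpr rfl
      · have hx0 : x = G.root := (hrt x (hs1VG _ _ e).1).mp hr
        rw [hr]
        exact hc y (hx0 ▸ e)
  · -- s2 edges
    intro x y e
    rcases hs2 _ _ e with he | he
    · exact he
    · have hxA : h x ∈ A.V := key x (hs2VG _ _ e).1
      have hxB : h x ∈ B.V := (hBs2V _ _ he).1
      rcases hinter ⟨hxA, hxB⟩ with hn | hr
      · have hx0 : x = G.null := (hnl x (hs2VG _ _ e).1).mp hn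
        have hy0 : y = G.null := (h2n y).mp (hx0 ▸ e)
        rw [hn, (hnl y (hs2VG _ _ e).2).mpr hy0]
        exact (hA2n A.null).mpr rfl
      · have hcn : h y = B.null := (hBor (h y)).mp (by rw [hroot, ← hr]; exact he)
        rw [hr, hcn, hnull]
        exact (hAor A.null).mpr rfl

/-- Disjunction via sum: for a heap `G` and orable graphs `G1`, `G2` sharing
`null` and `root` with `V¹ ∩ V² = {null, root}`:
`G → G1 + G2` iff (`G → G1` or `G → G2`). -/
theorem maps_gsum_iff {α γ : Type} (G : PreGraph γ) (G1 G2 : PreGraph α)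
    (hG : PreGraph.IsHeap G)
    (h1 : IsOrable G1) (h2 : IsOrable G2)
    (hnull : G2.null = G1.null) (hroot : G2.root = G1.root)
    (hinter : G1.V ∩ G2.V = {G1.null, G1.root}) :
    PreGraph.Maps G (gsum G1 G2) ↔
      (PreGraph.Maps G G1 ∨ PreGraph.Maps G G2) := by
  constructor
  · rintro ⟨h, hV, hs1, hs2, hrt, hnl⟩
    obtain ⟨y1, hy1, huy1⟩ := hG.2.1 G.root hG.1.2.2.1
    have hroot' : h G.root = G1.root := (hrt G.root hG.1.2.2.1).mpr rfl
    by_cases hc : G1.s1 G1.root (h y1)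
    · left
      refine ⟨h, maps_gsum_aux G G1 G2 hG h1 h2 hnull hroot hinter.le h hs1 hs2 hrt hnl ?_⟩
      intro y hy
      rwa [huy1 y hy]
    · right
      refine ⟨h, maps_gsum_aux G G2 G1 hG h2 h1 hnull.symm hroot.symm ?_ h
        (fun x y e => (hs1 x y e).symm) (fun x y e => (hs2 x y e).symm)
        (fun x hx => by rw [hroot]; exact hrt x hx)
        (fun x hx => by rw [hnull]; exact hnl x hx) ?_⟩
      · rw [Set.inter_comm, hinter, hnull, hroot]
      · intro y hy
        rw [huy1 y hy, hroot]
        rcases hs1 G.root y1 hy1 with he | he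
        · exact absurd (hroot' ▸ he) hc
        · exact hroot' ▸ he
  · rintro (⟨h, hV, hs1, hs2, hrt, hnl⟩ | ⟨h, hV, hs1, hs2, hrt, hnl⟩)
    · exact ⟨h, fun x hx => Or.inl (hV x hx),
        fun x y e => Or.inl (hs1 x y e), fun x y e => Or.inl (hs2 x y e), hrt, hnl⟩
    · refine ⟨h, fun x hx => Or.inr (hV x hx),
        fun x y e => Or.inr (hs1 x y e), fun x y e => Or.inr (hs2 x y e), ?_, ?_⟩
      · intro x hx
        show h x = G1.root ↔ x = G.root
        rw [← hroot]; exact hrt x hx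
      · intro x hx
        show h x = G1.null ↔ x = G.null
        rw [← hnull]; exact hnl x hx
end

section
/- Let G be a heap, let G1 and G2 be orable graphs with V¹ ∩ V² = {null, root} (sharing the same null and root), and let h : V → V¹ ∪ V² be a homomorphism from G to the graph sum G1 + G2. Then the image of h is contained in one summand: h[V] ⊆ V¹ or h[V] ⊆ V². -/
universe u v w

/-- A homomorphism from a heap into a sum of orable graphs has its image
contained in one of the summands: `h[V] ⊆ V¹` or `h[V] ⊆ V²`. -/
theorem hom_into_gsum_image {α γ : Type} (G : PreGraph γ) (G1 G2 : PreGraph α)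
    (hG : PreGraph.IsHeap G)
    (h1 : IsOrable G1) (h2 : IsOrable G2)
    (hnull : G2.null = G1.null) (hroot : G2.root = G1.root)
    (hinter : G1.V ∩ G2.V = {G1.null, G1.root})
    (h : γ → α) (hh : PreGraph.IsHom G (gsum G1 G2) h) :
    h '' G.V ⊆ G1.V ∨ h '' G.V ⊆ G2.V := by
  classical
  obtain ⟨⟨hfin, hn, hr, hrn, he1, he2, hs1null, hs2null⟩, hfun1, hfun2, hreach⟩ := hG
  obtain ⟨hmap, hes1, hes2, hrooth, hnullh⟩ := hh
  obtain ⟨⟨_, hn1, hr1, _, hV11, hV12, _, _⟩, hor1⟩ := h1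
  obtain ⟨⟨_, hn2, hr2, _, hV21, hV22, _, _⟩, hor2⟩ := h2
  have hhroot : h G.root = G1.root := (hrooth G.root hr).mpr rfl
  have hhnull : h G.null = G1.null := (hnullh G.null hn).mpr rfl
  obtain ⟨t1, ht1, ht1u⟩ := hfun1 G.root hr
  have hsum : G1.s1 (h G.root) (h t1) ∨ G2.s1 (h G.root) (h t1) := hes1 _ _ ht1
  have key : ∀ (W : Set α), G1.null ∈ W → G1.root ∈ W →
      (∀ y, G.edge G.root y → h y ∈ W) →
      (∀ x y, x ∈ G.V → h x ∈ W → h x ≠ G1.null → x ≠ G.root → G.edge x y → h y ∈ W) →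
      h '' G.V ⊆ W := by
    intro W hWn hWr hrstep hstep
    rintro _ ⟨x, hx, rfl⟩
    by_cases hxn : x = G.null
    · subst hxn; rw [hhnull]; exact hWn
    have hre := hreach x hx hxn
    clear hxn hx
    induction hre with
    | refl => rw [hhroot]; exact hWr
    | @tail b c hab hbc ih =>
      have hbV : b ∈ G.V := by
        cases hbc with
        | inl h' => exact (he1 _ _ h').1
        | inr h' => exact (he2 _ _ h').1
      by_cases hbroot : b = G.root
      · exact hrstep c (hbroot ▸ hbc)
      by_cases hbnull : b = G.null
      · subst hbnull
        have hcn : c = G.null := by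
          cases hbc with
          | inl h' => exact (hs1null c).mp h'
          | inr h' => exact (hs2null c).mp h'
        subst hcn; rw [hhnull]; exact hWn
      have hbn : h b ≠ G1.null := fun hc => hbnull ((hnullh b hbV).mp hc)
      exact hstep b c hbV ih hbn hbroot hbc
  have ht1V : h t1 ∈ G1.V ∨ h t1 ∈ G2.V := by
    cases hsum with
    | inl h' => exact Or.inl (hV11 _ _ h').2
    | inr h' => exact Or.inr (hV21 _ _ h').2
  have hn1' : G1.null ∈ G2.V := hnull ▸ hn2
  have hr1' : G1.root ∈ G2.V := hroot ▸ hr2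
  have hs2root : ∀ y, G.s2 G.root y → h y = G1.null := by
    intro y h'
    have := hes2 _ _ h'
    rw [hhroot] at this
    cases this with
    | inl h'' => exact (hor1 _).mp h''
    | inr h'' =>
      have := (hor2 _).mp (by rw [hroot]; exact h'')
      rw [this, hnull]
  have hnotV2 : ∀ x, x ∈ G.V → h x ∈ G1.V → h x ≠ G1.null → x ≠ G.root → h x ∉ G2.V := by
    intro x hxV hxW hxn hxr hc
    have hmem : h x ∈ ({G1.null, G1.root} : Set α) := hinter ▸ ⟨hxW, hc⟩
    cases hmem with
    | inl h' => exact hxn h'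
    | inr h' => exact hxr ((hrooth x hxV).mp h')
  have hnotV1 : ∀ x, x ∈ G.V → h x ∈ G2.V → h x ≠ G1.null → x ≠ G.root → h x ∉ G1.V := by
    intro x hxV hxW hxn hxr hc
    have hmem : h x ∈ ({G1.null, G1.root} : Set α) := hinter ▸ ⟨hc, hxW⟩
    cases hmem with
    | inl h' => exact hxn h'
    | inr h' => exact hxr ((hrooth x hxV).mp h')
  cases ht1V with
  | inl ht1W =>
    left
    apply key G1.V hn1 hr1
    · intro y hy
      cases hy with
      | inl h' => rw [ht1u y h']; exact ht1W
      | inr h' => rw [hs2root y h']; exact hn1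
    · intro x y hxV hxW hxn hxr hedge
      have hx2 := hnotV2 x hxV hxW hxn hxr
      cases hedge with
      | inl h' =>
        cases hes1 _ _ h' with
        | inl h'' => exact (hV11 _ _ h'').2
        | inr h'' => exact absurd (hV21 _ _ h'').1 hx2
      | inr h' =>
        cases hes2 _ _ h' with
        | inl h'' => exact (hV12 _ _ h'').2
        | inr h'' => exact absurd (hV22 _ _ h'').1 hx2
  | inr ht1W =>
    right
    apply key G2.V hn1' hr1'
    · intro y hy
      cases hy with
      | inl h' => rw [ht1u y h']; exact ht1W
      | inr h' => rw [hs2root y h']; exact hn1'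
    · intro x y hxV hxW hxn hxr hedge
      have hx1 := hnotV1 x hxV hxW hxn hxr
      cases hedge with
      | inl h' =>
        cases hes1 _ _ h' with
        | inl h'' => exact absurd (hV11 _ _ h'').1 hx1
        | inr h'' => exact (hV21 _ _ h'').2
      | inr h' =>
        cases hes2 _ _ h' with
        | inl h'' => exact absurd (hV12 _ _ h'').1 hx1
        | inr h'' => exact (hV22 _ _ h'').2
end

section
/- Disjunctions of arbitrary graphs do not exist over heaps: let G¹ be the graph with node set {root, null}, s1¹ = {⟨root, null⟩, ⟨null, null⟩}, s2¹ = {⟨root, root⟩, ⟨null, null⟩}, and let G² be the graph with node set {root, null}, s1² = {⟨root, root⟩, ⟨null, null⟩}, s2² = {⟨root, null⟩, ⟨null, null⟩}. Then there is no graph G⁰ such that for all heaps G: G → G⁰ if and only if (G → G¹ or G → G²). -/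
universe u v w

/-- The graph `G¹` with nodes `{root, null}` (encoded as `true`, `false`),
`s1 = {⟨root,null⟩, ⟨null,null⟩}` and `s2 = {⟨root,root⟩, ⟨null,null⟩}`. -/
def Gone : PreGraph Bool where
  V := Set.univ
  s1 := fun x y => (x = true ∧ y = false) ∨ (x = false ∧ y = false)
  s2 := fun x y => (x = true ∧ y = true) ∨ (x = false ∧ y = false)
  null := false
  root := true

/-- The graph `G²` with nodes `{root, null}` (encoded as `true`, `false`),
`s1 = {⟨root,root⟩, ⟨null,null⟩}` and `s2 = {⟨root,null⟩, ⟨null,null⟩}`. -/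
def Gtwo : PreGraph Bool where
  V := Set.univ
  s1 := fun x y => (x = true ∧ y = true) ∨ (x = false ∧ y = false)
  s2 := fun x y => (x = true ∧ y = false) ∨ (x = false ∧ y = false)
  null := false
  root := true

/-- The heap `G³` with nodes `{root, null}` and both `s1`- and `s2`-edges
from `root` to `null` (plus null self-loops). -/
def G3 : PreGraph Bool where
  V := Set.univ
  s1 := fun _ y => y = false
  s2 := fun _ y => y = false
  null := false
  root := true

lemma Gone_isHeap : PreGraph.IsHeap Gone := by
  refine ⟨⟨Set.finite_univ, trivial, trivial, by simp [Gone, Gtwo, G3], fun x y _ => ⟨trivial, trivial⟩,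
    fun x y _ => ⟨trivial, trivial⟩, by intro x; constructor <;> simp [Gone, Gtwo, G3], by intro x; constructor <;> simp [Gone, Gtwo, G3]⟩, ?_, ?_, ?_⟩
  · intro x _
    cases x
    · exact ⟨false, by simp [Gone, Gtwo, G3], by rintro (_|_) <;> simp [Gone, Gtwo, G3]⟩
    · exact ⟨false, by simp [Gone, Gtwo, G3], by rintro (_|_) <;> simp [Gone, Gtwo, G3]⟩
  · intro x _
    cases x
    · exact ⟨false, by simp [Gone, Gtwo, G3], by rintro (_|_) <;> simp [Gone, Gtwo, G3]⟩
    · exact ⟨true, by simp [Gone, Gtwo, G3], by rintro (_|_) <;> simp [Gone, Gtwo, G3]⟩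
  · intro x _ hx
    cases x
    · exact absurd rfl hx
    · exact Relation.ReflTransGen.refl

lemma Gtwo_isHeap : PreGraph.IsHeap Gtwo := by
  refine ⟨⟨Set.finite_univ, trivial, trivial, by simp [Gone, Gtwo, G3], fun x y _ => ⟨trivial, trivial⟩,
    fun x y _ => ⟨trivial, trivial⟩, by intro x; constructor <;> simp [Gone, Gtwo, G3], by intro x; constructor <;> simp [Gone, Gtwo, G3]⟩, ?_, ?_, ?_⟩
  · intro x _
    cases x
    · exact ⟨false, by simp [Gone, Gtwo, G3], by rintro (_|_) <;> simp [Gone, Gtwo, G3]⟩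
    · exact ⟨true, by simp [Gone, Gtwo, G3], by rintro (_|_) <;> simp [Gone, Gtwo, G3]⟩
  · intro x _
    cases x
    · exact ⟨false, by simp [Gone, Gtwo, G3], by rintro (_|_) <;> simp [Gone, Gtwo, G3]⟩
    · exact ⟨false, by simp [Gone, Gtwo, G3], by rintro (_|_) <;> simp [Gone, Gtwo, G3]⟩
  · intro x _ hx
    cases x
    · exact absurd rfl hx
    · exact Relation.ReflTransGen.refl

lemma G3_isHeap : PreGraph.IsHeap G3 := by
  refine ⟨⟨Set.finite_univ, trivial, trivial, by simp [Gone, Gtwo, G3], fun x y _ => ⟨trivial, trivial⟩,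
    fun x y _ => ⟨trivial, trivial⟩, by intro x; constructor <;> simp [Gone, Gtwo, G3], by intro x; constructor <;> simp [Gone, Gtwo, G3]⟩, ?_, ?_, ?_⟩
  · intro x _
    exact ⟨false, rfl, fun y hy => hy⟩
  · intro x _
    exact ⟨false, rfl, fun y hy => hy⟩
  · intro x _ hx
    cases x
    · exact absurd rfl hx
    · exact Relation.ReflTransGen.refl

lemma id_hom {α : Type u} (G : PreGraph α) : PreGraph.IsHom G G id :=
  ⟨fun _ hx => hx, fun _ _ h => h, fun _ _ h => h, fun _ _ => Iff.rfl, fun _ _ => Iff.rfl⟩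

/-- Disjunctions of arbitrary graphs do not exist over heaps: there is no
graph `G⁰` such that, for every heap `G`, `G → G⁰` iff
(`G → G¹` or `G → G²`). -/
theorem no_disjunction_of_Gone_Gtwo :
    ¬ ∃ (β : Type) (G0 : PreGraph β), PreGraph.IsGraph G0 ∧
      ∀ (γ : Type) (G : PreGraph γ), PreGraph.IsHeap G →
        (PreGraph.Maps G G0 ↔
          (PreGraph.Maps G Gone ∨ PreGraph.Maps G Gtwo)) := by
  rintro ⟨β, G0, hG0, hprop⟩
  obtain ⟨_, hnullV, hrootV, hrn, _, _, _, _⟩ := hG0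
  -- G¹ maps to G0
  obtain ⟨h1, hm1, he1, hf1, hr1, hn1⟩ :=
    (hprop Bool Gone Gone_isHeap).2 (Or.inl ⟨id, id_hom Gone⟩)
  obtain ⟨h2, hm2, he2, hf2, hr2, hn2⟩ :=
    (hprop Bool Gtwo Gtwo_isHeap).2 (Or.inr ⟨id, id_hom Gtwo⟩)
  have h1t : h1 true = G0.root := (hr1 true trivial).2 rfl
  have h1f : h1 false = G0.null := (hn1 false trivial).2 rfl
  have h2t : h2 true = G0.root := (hr2 true trivial).2 rfl
  have h2f : h2 false = G0.null := (hn2 false trivial).2 rfl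
  have e1 : G0.s1 G0.root G0.null := by
    have := he1 true false (Or.inl ⟨rfl, rfl⟩)
    rwa [h1t, h1f] at this
  have e2 : G0.s2 G0.root G0.null := by
    have := hf2 true false (Or.inl ⟨rfl, rfl⟩)
    rwa [h2t, h2f] at this
  have e3 : G0.s1 G0.null G0.null := by
    have := he1 false false (Or.inr ⟨rfl, rfl⟩)
    rwa [h1f] at this
  have e4 : G0.s2 G0.null G0.null := by
    have := hf1 false false (Or.inr ⟨rfl, rfl⟩)
    rwa [h1f] at this
  -- G³ maps to G0
  have m3 : PreGraph.Maps G3 G0 := by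
    refine ⟨fun b => if b then G0.root else G0.null, fun x _ => ?_, ?_, ?_, ?_, ?_⟩
    · cases x <;> simpa
    · rintro x y (rfl : y = false)
      cases x <;> simp <;> [exact e3; exact e1]
    · rintro x y (rfl : y = false)
      cases x <;> simp <;> [exact e4; exact e2]
    · intro x _
      cases x <;> simp [G3, hrn, Ne.symm hrn]
    · intro x _
      cases x <;> simp [G3, hrn]
  -- but G³ maps to neither G¹ nor G²
  rcases (hprop Bool G3 G3_isHeap).1 m3 with ⟨h, _, he, hf, hr, hn⟩ | ⟨h, _, he, hf, hr, hn⟩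
  · have ht : h true = true := (hr true trivial).2 rfl
    have hfv : h false = false := (hn false trivial).2 rfl
    have := hf true false rfl
    rw [ht, hfv] at this
    simp [Gone] at this
  · have ht : h true = true := (hr true trivial).2 rfl
    have hfv : h false = false := (hn false trivial).2 rfl
    have := he true false rfl
    rw [ht, hfv] at this
    simp [Gtwo] at this
end

section
/- Let G¹ be the graph with node set {root, null}, s1¹ = {⟨root, null⟩, ⟨null, null⟩} and s2¹ = {⟨root, root⟩, ⟨null, null⟩}. Then in the class of heaps, the only model of G¹ is G¹ itself: every heap G with G → G¹ is isomorphic to G¹ (there is a bijective homomorphism between G and G¹ whose inverse is also a homomorphism). -/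
universe u v w

/-- In the class of heaps, the only model of `G¹` is `G¹` itself: every heap
`G` with `G → G¹` is isomorphic to `G¹` (there is a bijective homomorphism
between `G` and `G¹` whose inverse is also a homomorphism). -/
theorem only_heap_model_of_Gone_is_Gone {γ : Type} (G : PreGraph γ)
    (hG : PreGraph.IsHeap G) (hmap : PreGraph.Maps G Gone) :
    ∃ (h : γ → Bool) (g : Bool → γ),
      PreGraph.IsHom G Gone h ∧ PreGraph.IsHom Gone G g ∧
      Set.BijOn h G.V Gone.V ∧
      (∀ x ∈ G.V, g (h x) = x) ∧ (∀ y ∈ Gone.V, h (g y) = y) := by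

  obtain ⟨h, hV, h1, h2, hroot, hnull⟩ := hmap
  obtain ⟨⟨hfin, hnV, hrV, hrn, hs1V, hs2V, hn1, hn2⟩, ht1, ht2, hreach⟩ := hG
  have hhr : h G.root = true := (hroot G.root hrV).mpr rfl
  have hhn : h G.null = false := (hnull G.null hnV).mpr rfl
  -- any s1-target is null
  have tgt1 : ∀ x y, G.s1 x y → y = G.null := by
    intro x y e
    have hcV := (hs1V _ _ e).2
    have := h1 _ _ e
    rcases this with ⟨_, hf⟩ | ⟨_, hf⟩ <;> exact (hnull y hcV).mp hf
  have tgt2 : ∀ x y, G.s2 x y → y = G.root ∨ y = G.null := by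
    intro x y e
    have hcV := (hs2V _ _ e).2
    rcases h2 _ _ e with ⟨_, hf⟩ | ⟨_, hf⟩
    · exact Or.inl ((hroot y hcV).mp hf)
    · exact Or.inr ((hnull y hcV).mp hf)
  have key : ∀ x ∈ G.V, x = G.root ∨ x = G.null := by
    intro x hx
    by_cases hxn : x = G.null
    · exact Or.inr hxn
    have hr := hreach x hx hxn
    clear hxn hx
    induction hr with
    | refl => exact Or.inl rfl
    | tail _ e _ =>
      cases e with
      | inl e1 => exact Or.inr (tgt1 _ _ e1)
      | inr e2 => exact tgt2 _ _ e2
  -- G.s1 G.root G.null and G.s2 G.root G.root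
  have e1rn : G.s1 G.root G.null := by
    obtain ⟨y, hy, -⟩ := ht1 G.root hrV
    have := tgt1 _ _ hy; rwa [this] at hy
  have e2rr : G.s2 G.root G.root := by
    obtain ⟨y, hy, -⟩ := ht2 G.root hrV
    rcases tgt2 _ _ hy with hyr | hyn
    · rwa [hyr] at hy
    · exfalso
      rw [hyn] at hy
      rcases h2 _ _ hy with ⟨ht, hf⟩ | ⟨ht, hf⟩
      · rw [hhn] at hf; exact absurd hf (by simp)
      · rw [hhr] at ht; exact absurd ht (by simp)
  have e1nn : G.s1 G.null G.null := (hn1 G.null).mpr rfl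
  have e2nn : G.s2 G.null G.null := (hn2 G.null).mpr rfl
  refine ⟨h, fun b => if b then G.root else G.null, ⟨hV, h1, h2, hroot, hnull⟩, ?_, ?_, ?_, ?_⟩
  · refine ⟨fun x _ => ?_, ?_, ?_, ?_, ?_⟩
    · cases x
      · simpa using hnV
      · simpa using hrV
    · intro x y e
      rcases e with ⟨hx, hy⟩ | ⟨hx, hy⟩ <;> subst hx <;> subst hy <;> simpa using ‹_›
    · intro x y e
      rcases e with ⟨hx, hy⟩ | ⟨hx, hy⟩ <;> subst hx <;> subst hy <;> simpa using ‹_›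
    · intro x _
      cases x <;> simp [Gone, hrn, Ne.symm hrn]
    · intro x _
      cases x <;> simp [Gone, hrn, Ne.symm hrn]
  · refine ⟨fun x _ => trivial, ?_, ?_⟩
    · intro x hx y hy hxy
      rcases key x hx with hx' | hx' <;> rcases key y hy with hy' | hy' <;> subst hx' <;> subst hy'
      · rfl
      · rw [hhr, hhn] at hxy; simp at hxy
      · rw [hhn, hhr] at hxy; simp at hxy
      · rfl
    · intro y _
      cases y
      · exact ⟨G.null, hnV, hhn⟩
      · exact ⟨G.root, hrV, hhr⟩
  · intro x hx
    rcases key x hx with hx' | hx' <;> subst hx' <;> simp [hhr, hhn]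
  · intro y _
    cases y <;> simp [hhr, hhn]
end
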